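/- Let X be a Euclidean vector space and a ∈ 𝔬(X) skew-adjoint. Define Π_a = (I − e^{−a})/a ∈ End(X) (interpreted via power series, equal to ∫₀¹ e^{−sa} ds) and the 2-form ϖ_a(ξ₁,ξ₂) = −B((a − sinh a)/a² · ξ₁, ξ₂). Then for every ξ ∈ X, the element (aξ, ξ) ∈ X⊕X* is related to e_{exp(a)}(ξ) = ((I−e^{−a})ξ, (I+e^{−a})ξ/2) under the morphism (Π_a, −ϖ_a). Moreover, this morphism has trivial kernel on the graph Gr_a = {(aξ,ξ)} if and only if Π_a is invertible. -/

import Mathlib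

/-!
Every operator in sight is a power series in the single operator `a` with factorially decaying
coefficients, so each identity between them is an identity of coefficient sequences:
`Π_a a = 1 - e^{-a}`, `Π_{-a} e^{-a} = Π_a` (a Cauchy product, i.e. an alternating binomial sum),
`Π_a + Π_{-a} = 2 sinh a / a` and `((a - sinh a)/a²) a = 1 - sinh a / a`.
For skew `a` the adjoint of `Π_a` is `Π_{-a}`, so the relation reads
`α = ((a - sinh a)/a²) v + Π_{-a} α'`, and the first claim is the sum of these identities.
On the graph `Gr_a` the kernel of the morphism is `ker (Π_a a) ∩ ker (sinh a / a)`. Since `Π_a` is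
normal, `ker Π_a ⊆ ker Π_{-a}`, which puts `ker Π_a` inside that kernel; conversely, if `Π_a` is
injective then `a ξ = 0`, hence `ξ = ξ - (sinh a / a) ξ = ((a - sinh a)/a²) (a ξ) = 0`.
-/
open RealInnerProductSpace

/-- `Π_a = (I - e^{-a})/a = ∑_{n≥0} (-1)ⁿ aⁿ/(n+1)!`, defined by its power series. -/
noncomputable def PiMap {X : Type*} [NormedAddCommGroup X] [InnerProductSpace ℝ X]
    [FiniteDimensional ℝ X] (a : X →L[ℝ] X) : X →L[ℝ] X :=
  ∑' n : ℕ, (((-1 : ℝ) ^ n / (Nat.factorial (n + 1) : ℝ)) • a ^ n)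

/-- `(a - sinh a)/a² = -∑_{k≥0} a^{2k+1}/(2k+3)!`, defined by its power series. -/
noncomputable def sinhQuot {X : Type*} [NormedAddCommGroup X] [InnerProductSpace ℝ X]
    [FiniteDimensional ℝ X] (a : X →L[ℝ] X) : X →L[ℝ] X :=
  ∑' k : ℕ, ((-(1 : ℝ) / (Nat.factorial (2 * k + 3) : ℝ)) • a ^ (2 * k + 1))

/-- The 2-form `ϖ_a(ξ₁,ξ₂) = -B((a - sinh a)/a² ξ₁, ξ₂)`. -/
noncomputable def varpiForm {X : Type*} [NormedAddCommGroup X] [InnerProductSpace ℝ X]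
    [FiniteDimensional ℝ X] (a : X →L[ℝ] X) (ξ₁ ξ₂ : X) : ℝ :=
  -⟪sinhQuot a ξ₁, ξ₂⟫

/-- The relation defined by the morphism `(Π_a, -ϖ_a)` on `X ⊕ X* ≅ X ⊕ X`:
`(v, α) ∼ (v', α')` iff `v' = Π_a v` and `α = ι_v(-ϖ_a) + Π_a^* α'`. -/
noncomputable def expRel {X : Type*} [NormedAddCommGroup X] [InnerProductSpace ℝ X]
    [FiniteDimensional ℝ X] (a : X →L[ℝ] X) (x y : X × X) : Prop :=
  y.1 = PiMap a x.1 ∧ ∀ u : X, ⟪x.2, u⟫ = -varpiForm a x.1 u + ⟪y.2, PiMap a u⟫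

open Finset
open scoped Nat

section EvalSeries

variable {𝔸 : Type*} [NormedRing 𝔸] [NormedAlgebra ℝ 𝔸]

noncomputable def evalSeries (c : ℕ → ℝ) (a : 𝔸) : 𝔸 := ∑' n, c n • a ^ n

theorem summable_norm_smul_pow_of_abs_le {c : ℕ → ℝ} (hc : ∀ n, |c n| ≤ (n ! : ℝ)⁻¹) (a : 𝔸) :
    Summable fun n => ‖c n • a ^ n‖ := by
  refine (NormedSpace.norm_expSeries_summable' (𝕂 := ℝ) a).of_nonneg_of_le
    (fun _ => norm_nonneg _) fun n => ?_
  rw [norm_smul, norm_smul, Real.norm_eq_abs, Real.norm_eq_abs, abs_inv, Nat.abs_cast]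
  exact mul_le_mul_of_nonneg_right (hc n) (norm_nonneg _)

theorem summable_smul_pow_of_abs_le [CompleteSpace 𝔸] {c : ℕ → ℝ}
    (hc : ∀ n, |c n| ≤ (n ! : ℝ)⁻¹) (a : 𝔸) : Summable fun n => c n • a ^ n :=
  (summable_norm_smul_pow_of_abs_le hc a).of_norm

theorem evalSeries_neg (c : ℕ → ℝ) (a : 𝔸) :
    evalSeries c (-a) = evalSeries (fun n => (-1) ^ n * c n) a := by
  refine tsum_congr fun n => ?_
  rw [← neg_one_smul ℝ a, smul_pow, smul_smul, mul_comm]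

theorem evalSeries_smul (r : ℝ) (c : ℕ → ℝ) (a : 𝔸) :
    r • evalSeries c a = evalSeries (fun n => r * c n) a := by
  simp only [evalSeries, mul_smul]
  exact (tsum_const_smul'' r).symm

theorem evalSeries_single_zero (a : 𝔸) : evalSeries (Pi.single 0 1) a = 1 := by
  rw [evalSeries, tsum_eq_single 0 fun n hn => by simp [hn]]
  simp

theorem commute_evalSeries {b a : 𝔸} (h : Commute b a) (c : ℕ → ℝ) :
    Commute b (evalSeries c a) :=
  Commute.tsum_right b fun n => (h.pow_right n).smul_right (c n)

theorem star_evalSeries [StarRing 𝔸] [StarModule ℝ 𝔸] [ContinuousStar 𝔸] (c : ℕ → ℝ) (a : 𝔸) :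
    star (evalSeries c a) = evalSeries c (star a) := by
  simp only [evalSeries, tsum_star, star_smul, star_pow, star_trivial]

variable {c d : ℕ → ℝ} {a : 𝔸}

theorem evalSeries_add (hc : Summable fun n => c n • a ^ n) (hd : Summable fun n => d n • a ^ n) :
    evalSeries c a + evalSeries d a = evalSeries (fun n => c n + d n) a := by
  simp only [evalSeries, add_smul]
  exact (hc.tsum_add hd).symm

theorem evalSeries_sub (hc : Summable fun n => c n • a ^ n) (hd : Summable fun n => d n • a ^ n) :
    evalSeries c a - evalSeries d a = evalSeries (fun n => c n - d n) a := by
  simp only [evalSeries, sub_smul]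
  exact (hc.tsum_sub hd).symm

theorem evalSeries_mul_self (hc : Summable fun n => c n • a ^ n) (hd₀ : d 0 = 0)
    (hd : ∀ n, d (n + 1) = c n) : evalSeries c a * a = evalSeries d a := by
  have hshift : ∀ n, c n • a ^ n * a = d (n + 1) • a ^ (n + 1) := fun n => by
    rw [hd, pow_succ, smul_mul_assoc]
  rw [evalSeries, ← hc.tsum_mul_right, evalSeries,
    tsum_eq_zero_add' (f := fun n => d n • a ^ n) ((hc.mul_right a).congr hshift), hd₀,
    zero_smul, zero_add]
  exact tsum_congr hshift

theorem evalSeries_mul [CompleteSpace 𝔸] (hc : Summable fun n => ‖c n • a ^ n‖)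
    (hd : Summable fun n => ‖d n • a ^ n‖) :
    evalSeries c a * evalSeries d a =
      evalSeries (fun n => ∑ p ∈ antidiagonal n, c p.1 * d p.2) a := by
  rw [evalSeries, evalSeries, tsum_mul_tsum_eq_tsum_sum_antidiagonal_of_summable_norm hc hd]
  refine tsum_congr fun n => ?_
  rw [sum_smul]
  refine sum_congr rfl fun p hp => ?_
  rw [smul_mul_smul_comm, ← pow_add, mem_antidiagonal.mp hp]

end EvalSeries

theorem abs_div_factorial_le {x : ℝ} (hx : |x| ≤ 1) {m n : ℕ} (h : n ≤ m) :
    |x / m !| ≤ (n ! : ℝ)⁻¹ := by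
  rw [abs_div, Nat.abs_cast, div_eq_mul_inv]
  calc |x| * (m ! : ℝ)⁻¹ ≤ 1 * (n ! : ℝ)⁻¹ :=
        mul_le_mul hx (inv_anti₀ (by positivity) (mod_cast Nat.factorial_le h))
          (by positivity) zero_le_one
    _ = (n ! : ℝ)⁻¹ := one_mul _

theorem sum_antidiagonal_inv_factorial_succ_mul_neg_one_pow (n : ℕ) :
    ∑ p ∈ antidiagonal n, 1 / ((p.1 + 1) ! : ℝ) * ((-1) ^ p.2 / p.2 !) =
      (-1) ^ n / (n + 1) ! := by
  have hterm : ∀ k ∈ range (n + 1), (-1) ^ k / (k ! : ℝ) * (1 / (n - k + 1) !) =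
      (-1) ^ k * (n + 1).choose k / (n + 1) ! := fun k hk => by
    have hk : k ≤ n := Nat.lt_succ_iff.mp (mem_range.mp hk)
    rw [Nat.cast_choose ℝ (by omega : k ≤ n + 1), Nat.sub_add_comm hk]
    field_simp
  have halt : ∑ k ∈ range (n + 1), (-1) ^ k * ((n + 1).choose k : ℝ) = (-1) ^ n := by
    have := Int.alternating_sum_range_choose_eq_choose (n := n) (m := n)
    rw [Nat.choose_self, Nat.cast_one, mul_one] at this
    exact_mod_cast this
  calc ∑ p ∈ antidiagonal n, 1 / ((p.1 + 1) ! : ℝ) * ((-1) ^ p.2 / p.2 !)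
      = ∑ k ∈ range (n + 1), (-1) ^ k / (k ! : ℝ) * (1 / (n - k + 1) !) := by
        rw [← Nat.sum_antidiagonal_swap]
        simp only [Prod.fst_swap, Prod.snd_swap, mul_comm (1 / _ : ℝ)]
        exact Nat.sum_antidiagonal_eq_sum_range_succ
          (fun i j => (-1) ^ i / (i ! : ℝ) * (1 / (j + 1) !)) n
    _ = (-1) ^ n / (n + 1) ! := by rw [sum_congr rfl hterm, ← sum_div, halt]

theorem exp_neg_eq_evalSeries {𝔸 : Type*} [NormedRing 𝔸] [NormedAlgebra ℝ 𝔸] (a : 𝔸) :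
    NormedSpace.exp (-a) = evalSeries (fun n => (-1) ^ n / n !) a := by
  rw [NormedSpace.exp_eq_tsum ℝ]
  exact (evalSeries_neg (fun n => (n ! : ℝ)⁻¹) a).trans (by simp only [div_eq_mul_inv])

section Series

variable {X : Type*} [NormedAddCommGroup X] [InnerProductSpace ℝ X] [FiniteDimensional ℝ X]
  (a : X →L[ℝ] X)

noncomputable def sinhDivSelf : X →L[ℝ] X :=
  evalSeries (fun n => (if Even n then 1 else 0) / (n + 1) !) a

theorem piMap_eq_evalSeries : PiMap a = evalSeries (fun n => (-1) ^ n / (n + 1) !) a := rfl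

theorem piMap_neg_eq_evalSeries : PiMap (-a) = evalSeries (fun n => 1 / (n + 1) !) a := by
  rw [piMap_eq_evalSeries, evalSeries_neg]
  simp only [mul_div_assoc', ← mul_pow, neg_one_mul, neg_neg, one_pow]

theorem sinhQuot_eq_evalSeries :
    sinhQuot a = evalSeries (fun n => (if Even n then 0 else -1) / (n + 2) !) a := by
  have hodd : Function.Injective fun k : ℕ => 2 * k + 1 := fun _ _ h => by simp only at h; omega
  refine (tsum_congr fun k => ?_).trans (hodd.tsum_eq fun n hn => ?_)
  · simp [neg_div]
  · have hodd_n : ¬Even n := fun h => hn (by simp [h])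
    obtain ⟨k, rfl⟩ := Nat.not_even_iff_odd.mp hodd_n
    exact ⟨k, rfl⟩

theorem piMap_mul_self : PiMap a * a = 1 - NormedSpace.exp (-a) := by
  rw [exp_neg_eq_evalSeries, ← evalSeries_single_zero a,
    evalSeries_sub (summable_smul_pow_of_abs_le (fun n => by rcases n with _ | n <;> simp) a)
      (summable_smul_pow_of_abs_le (fun n => abs_div_factorial_le (by simp) le_rfl) a)]
  refine evalSeries_mul_self
    (summable_smul_pow_of_abs_le (fun n => abs_div_factorial_le (by simp) n.le_succ) a)
    (by simp) fun n => ?_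
  simp [pow_succ, neg_div]

theorem piMap_add_piMap_neg : PiMap a + PiMap (-a) = (2 : ℝ) • sinhDivSelf a := by
  rw [piMap_neg_eq_evalSeries, piMap_eq_evalSeries, sinhDivSelf,
    evalSeries_add
      (summable_smul_pow_of_abs_le (fun n => abs_div_factorial_le (by simp) n.le_succ) a)
      (summable_smul_pow_of_abs_le (fun n => abs_div_factorial_le (by simp) n.le_succ) a),
    evalSeries_smul]
  congr 1
  ext n
  by_cases hn : Even n
  · simp only [hn.neg_one_pow, if_pos hn]
    ring
  · simp only [(Nat.not_even_iff_odd.mp hn).neg_one_pow, if_neg hn]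
    ring

theorem sinhQuot_mul_self : sinhQuot a * a = 1 - sinhDivSelf a := by
  rw [sinhDivSelf, ← evalSeries_single_zero a,
    evalSeries_sub (summable_smul_pow_of_abs_le (fun n => by rcases n with _ | n <;> simp) a)
      (summable_smul_pow_of_abs_le
        (fun n => abs_div_factorial_le (by split_ifs <;> simp) n.le_succ) a),
    sinhQuot_eq_evalSeries]
  refine evalSeries_mul_self
    (summable_smul_pow_of_abs_le
      (fun n => abs_div_factorial_le (by split_ifs <;> simp) (by omega)) a)
    (by simp) fun n => ?_
  by_cases hn : Even n <;> simp [hn, Nat.even_add_one, neg_div]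

theorem piMap_neg_mul_exp_neg : PiMap (-a) * NormedSpace.exp (-a) = PiMap a := by
  rw [piMap_neg_eq_evalSeries, exp_neg_eq_evalSeries,
    evalSeries_mul
      (summable_norm_smul_pow_of_abs_le (fun n => abs_div_factorial_le (by simp) n.le_succ) a)
      (summable_norm_smul_pow_of_abs_le (fun n => abs_div_factorial_le (by simp) le_rfl) a)]
  simp only [sum_antidiagonal_inv_factorial_succ_mul_neg_one_pow]
  rfl

end Series

section Skew

variable {X : Type*} [NormedAddCommGroup X] [InnerProductSpace ℝ X] [FiniteDimensional ℝ X]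
  {a : X →L[ℝ] X}

theorem star_eq_neg_of_inner_apply_eq_neg (ha : ∀ v w : X, ⟪a v, w⟫ = -⟪v, a w⟫) :
    star a = -a := by
  rw [ContinuousLinearMap.star_eq_adjoint, eq_comm, ContinuousLinearMap.eq_adjoint_iff]
  intro v w
  rw [neg_apply, inner_neg_left, ha, neg_neg]

theorem adjoint_piMap (ha : ∀ v w : X, ⟪a v, w⟫ = -⟪v, a w⟫) :
    ContinuousLinearMap.adjoint (PiMap a) = PiMap (-a) := by
  rw [← ContinuousLinearMap.star_eq_adjoint, piMap_eq_evalSeries, star_evalSeries,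
    star_eq_neg_of_inner_apply_eq_neg ha]
  rfl

theorem commute_piMap_self (a : X →L[ℝ] X) : Commute (PiMap a) a :=
  (commute_evalSeries (Commute.refl a) _).symm

theorem isStarNormal_piMap (ha : ∀ v w : X, ⟪a v, w⟫ = -⟪v, a w⟫) : IsStarNormal (PiMap a) := by
  rw [isStarNormal_iff, ContinuousLinearMap.star_eq_adjoint, adjoint_piMap ha,
    piMap_neg_eq_evalSeries]
  exact (commute_evalSeries (commute_piMap_self a) _).symm

theorem expRel_iff (ha : ∀ v w : X, ⟪a v, w⟫ = -⟪v, a w⟫) (x y : X × X) :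
    expRel a x y ↔ y.1 = PiMap a x.1 ∧ x.2 = sinhQuot a x.1 + PiMap (-a) y.2 := by
  simp only [expRel, varpiForm, neg_neg, ← ContinuousLinearMap.adjoint_inner_left,
    adjoint_piMap ha, ← inner_add_left]
  rw [← ext_iff_inner_right ℝ]

theorem piMap_neg_apply_eq_zero (ha : ∀ v w : X, ⟪a v, w⟫ = -⟪v, a w⟫) {ξ : X}
    (hξ : PiMap a ξ = 0) : PiMap (-a) ξ = 0 := by
  rwa [← adjoint_piMap ha,
    ContinuousLinearMap.IsStarNormal.adjoint_apply_eq_zero_iff (isStarNormal_piMap ha)]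

theorem expRel_graph_exp (ha : ∀ v w : X, ⟪a v, w⟫ = -⟪v, a w⟫) (ξ : X) :
    expRel a (a ξ, ξ)
      (ξ - NormedSpace.exp (-a) ξ, (2⁻¹ : ℝ) • (ξ + NormedSpace.exp (-a) ξ)) := by
  refine (expRel_iff ha _ _).2 ⟨?_, ?_⟩
  · simpa using (DFunLike.congr_fun (piMap_mul_self a) ξ).symm
  · have hPiNeg := DFunLike.congr_fun (piMap_neg_mul_exp_neg a) ξ
    have hSum := DFunLike.congr_fun (piMap_add_piMap_neg a) ξ
    have hSinh := DFunLike.congr_fun (sinhQuot_mul_self a) ξ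
    simp only [mul_apply_eq_comp, add_apply, sub_apply, smul_apply, one_apply_eq_self]
      at hPiNeg hSum hSinh
    rw [map_smul, map_add, hPiNeg, add_comm (PiMap (-a) ξ), hSum, hSinh, smul_smul]
    norm_num

theorem expRel_graph_zero_iff (ha : ∀ v w : X, ⟪a v, w⟫ = -⟪v, a w⟫) (ξ : X) :
    expRel a (a ξ, ξ) 0 ↔ PiMap a (a ξ) = 0 ∧ sinhDivSelf a ξ = 0 := by
  have hSinh := DFunLike.congr_fun (sinhQuot_mul_self a) ξ
  simp only [mul_apply_eq_comp, sub_apply, one_apply_eq_self] at hSinh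
  simp [expRel_iff ha, hSinh, eq_comm (a := (0 : X)), eq_comm (a := ξ)]

end Skew

/-- for skew-adjoint `a`, every element `(aξ, ξ)` of the graph `Gr_a`
is `(Π_a, -ϖ_a)`-related to `e_{exp a}(ξ) = ((I - e^{-a})ξ, (I + e^{-a})ξ/2)`;
moreover the morphism `(Π_a, -ϖ_a)` has trivial kernel on `Gr_a` iff `Π_a` is
invertible. -/
theorem exp_Dirac_morphism
    {X : Type*} [NormedAddCommGroup X] [InnerProductSpace ℝ X] [FiniteDimensional ℝ X]
    (a : X →L[ℝ] X) (ha : ∀ v w : X, ⟪a v, w⟫ = -⟪v, a w⟫) :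
    (∀ ξ : X, expRel a (a ξ, ξ)
        (ξ - NormedSpace.exp (-a) ξ, (2⁻¹ : ℝ) • (ξ + NormedSpace.exp (-a) ξ))) ∧
    ((∀ ξ : X, expRel a (a ξ, ξ) 0 → ξ = 0) ↔ Function.Bijective (PiMap a)) := by
  refine ⟨expRel_graph_exp ha, fun h => ?_, fun hPiBij ξ hξ => ?_⟩
  · have hinj : Function.Injective (PiMap a) := (injective_iff_map_eq_zero _).2 fun ξ hξ => by
      have hSum := DFunLike.congr_fun (piMap_add_piMap_neg a) ξ
      rw [add_apply, hξ, piMap_neg_apply_eq_zero ha hξ, add_zero, smul_apply] at hSum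
      refine h ξ ((expRel_graph_zero_iff ha ξ).2 ⟨?_, ?_⟩)
      · rw [← mul_apply_eq_comp, (commute_piMap_self a).eq, mul_apply_eq_comp, hξ, map_zero]
      · simpa using hSum.symm
    exact ⟨hinj, LinearMap.injective_iff_surjective.mp hinj⟩
  · obtain ⟨hPiZero, hSinhZero⟩ := (expRel_graph_zero_iff ha ξ).1 hξ
    have haξ : a ξ = 0 := hPiBij.injective (hPiZero.trans (map_zero _).symm)
    have hSinh := DFunLike.congr_fun (sinhQuot_mul_self a) ξ
    simpa [haξ, hSinhZero, eq_comm] using hSinh
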